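/- Let α be the real root of t³−5t²+6t−1 with α ≈ 3.24698 (α = [3]_7+[5]_7). Let D = 49(7+15[3]_7+12[5]_7). Then for d = 3+4α, the number D/d² is not the largest among its Galois conjugates: D/d² ≈ 8.2884 while one of its conjugates is ≈ 328.5234. In particular, D/d² is not the Frobenius–Perron dimension of any finite tensor category. -/

import Mathlib

open Real

/-- The quantum number `[k]_7 = sin(kπ/7)/sin(π/7)`. -/
noncomputable def qnum7 (k : ℕ) : ℝ := sin (k * π / 7) / sin (π / 7)

/-- `α = [3]_7 + [5]_7`. -/
noncomputable def alpha : ℝ := qnum7 3 + qnum7 5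

/-- The Galois conjugates of `D/d²`, where `D = 49(7+15[3]_7+12[5]_7)` and
`d = 3 + 4α`, expressed via the conjugates `c = 2cos(kπ/7)` (`k = 1, 3, 5`)
of `2cos(π/7)`: under the embedding sending `2cos(π/7)` to `c` one has
`[3]_7 ↦ c² - 1`, `[5]_7 ↦ c`, `α ↦ c² + c - 1`. -/
noncomputable def ratioConj (c : ℝ) : ℝ :=
  (49 * (7 + 15 * (c ^ 2 - 1) + 12 * c)) / (3 + 4 * (c ^ 2 + c - 1)) ^ 2

/-!
Since `[5]_7 = 2cos(π/7)` and `[3]_7 = (2cos(π/7))² - 1`, the number `D/d²` is `ratioConj c₁`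
with `c₁ = 2cos(π/7)`. The conjugates `c₁ ≈ 1.802` and `c₅ = 2cos(5π/7) ≈ -1.247` are roots of
`x³ - x² - 2x + 1`; coarse bounds on the cosines single them out among its roots, and then the
cubic traps them in intervals of width `1/100`, on which `ratioConj` stays below `9` near `c₁`
and above `9` near `c₅`.
-/

theorem qnum7_five : qnum7 5 = 2 * cos (π / 7) := by
  have hsin : sin (π / 7) ≠ 0 :=
    (sin_pos_of_pos_of_lt_pi (by positivity) (by linarith [pi_pos])).ne'
  rw [qnum7, show ((5 : ℕ) : ℝ) * π / 7 = π - 2 * (π / 7) by push_cast; ring, sin_pi_sub,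
    sin_two_mul]
  field_simp

theorem qnum7_three : qnum7 3 = (2 * cos (π / 7)) ^ 2 - 1 := by
  have hsin : sin (π / 7) ≠ 0 :=
    (sin_pos_of_pos_of_lt_pi (by positivity) (by linarith [pi_pos])).ne'
  rw [qnum7, show ((3 : ℕ) : ℝ) * π / 7 = 3 * (π / 7) by push_cast; ring, sin_three_mul]
  field_simp
  linear_combination (-4) * sin_sq_add_cos_sq (π / 7)

/-- `cos 4θ + cos 3θ = (cos θ + 1)(8 cos³θ - 4 cos²θ - 4 cos θ + 1)`, so the hypothesis holds
whenever `7θ ≡ π (mod 2π)`. -/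
theorem two_cos_cubic_of_cos_four_mul_eq_neg {θ : ℝ} (h : cos (4 * θ) = -cos (3 * θ))
    (hθ : cos θ ≠ -1) : (2 * cos θ) ^ 3 - (2 * cos θ) ^ 2 - 2 * (2 * cos θ) + 1 = 0 := by
  have h4 : cos (4 * θ) = 2 * (2 * cos θ ^ 2 - 1) ^ 2 - 1 := by
    rw [show 4 * θ = 2 * (2 * θ) by ring, cos_two_mul, cos_two_mul]
  rw [h4, cos_three_mul] at h
  have hfac : (cos θ + 1) * ((2 * cos θ) ^ 3 - (2 * cos θ) ^ 2 - 2 * (2 * cos θ) + 1) = 0 := by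
    linear_combination h
  exact (mul_eq_zero.1 hfac).resolve_left fun h0 => hθ (eq_neg_of_add_eq_zero_left h0)

theorem cubic_root_bounds_of_one_le {c : ℝ} (hc : c ^ 3 - c ^ 2 - 2 * c + 1 = 0)
    (hc1 : 1 ≤ c) : 9 / 5 < c ∧ c < 181 / 100 := by
  constructor
  · have hq : (c - 9 / 5) * (c ^ 2 + 4 / 5 * c - 14 / 25) = 1 / 125 := by
      linear_combination hc
    nlinarith [sq_nonneg (c - 1)]
  · have hq : (c - 181 / 100) * (c ^ 2 + 81 / 100 * c - 5339 / 10000) = -(33641 / 1000000) := by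
      linear_combination hc
    nlinarith [sq_nonneg (c - 1)]

theorem cubic_root_bounds_of_nonpos {c : ℝ} (hc : c ^ 3 - c ^ 2 - 2 * c + 1 = 0)
    (hc0 : c ≤ 0) : -5 / 4 < c ∧ c < -31 / 25 := by
  constructor
  · have hq : (c + 5 / 4) * (c ^ 2 - 9 / 4 * c + 13 / 16) = 1 / 64 := by
      linear_combination hc
    nlinarith [sq_nonneg c]
  · have hq : (c + 31 / 25) * (c ^ 2 - 56 / 25 * c + 486 / 625) = -(559 / 15625) := by
      linear_combination hc
    nlinarith [sq_nonneg c]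

theorem two_cos_pi_div_seven_bounds : 9 / 5 < 2 * cos (π / 7) ∧ 2 * cos (π / 7) < 181 / 100 := by
  have hpi := pi_pos
  have hlow : 1 / 2 ≤ cos (π / 7) := by
    rw [← cos_pi_div_three]
    exact cos_le_cos_of_nonneg_of_le_pi (by positivity) (by linarith) (by linarith)
  have hcubic := two_cos_cubic_of_cos_four_mul_eq_neg (θ := π / 7)
    (by rw [show 4 * (π / 7) = π - 3 * (π / 7) by ring, cos_pi_sub]) (by linarith)
  exact cubic_root_bounds_of_one_le hcubic (by linarith)

theorem two_cos_five_pi_div_seven_bounds :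
    -5 / 4 < 2 * cos (5 * π / 7) ∧ 2 * cos (5 * π / 7) < -31 / 25 := by
  have hpi := pi_pos
  have hnonpos : cos (5 * π / 7) ≤ 0 :=
    cos_nonpos_of_pi_div_two_le_of_le (by linarith) (by linarith)
  have hgt : -1 < cos (5 * π / 7) := by
    rw [← cos_pi]
    exact cos_lt_cos_of_nonneg_of_le_pi (by positivity) le_rfl (by linarith)
  have hcubic := two_cos_cubic_of_cos_four_mul_eq_neg (θ := 5 * π / 7)
    (by rw [show 4 * (5 * π / 7) = π - π / 7 + 2 * π by ring,
        show 3 * (5 * π / 7) = π / 7 + 2 * π by ring, cos_add_two_pi, cos_add_two_pi,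
        cos_pi_sub]) hgt.ne'
  exact cubic_root_bounds_of_nonpos hcubic (by linarith)

theorem ratioConj_lt_nine {c : ℝ} (h1 : 9 / 5 < c) (h2 : c < 181 / 100) : ratioConj c < 9 := by
  rw [ratioConj, div_lt_iff₀ (pow_pos (by nlinarith) 2)]
  nlinarith [mul_pos (sub_pos.2 h1) (sub_pos.2 h2), sq_nonneg (c - 9 / 5)]

theorem nine_lt_ratioConj {c : ℝ} (h1 : -5 / 4 < c) (h2 : c < -31 / 25) : 9 < ratioConj c := by
  rw [ratioConj, lt_div_iff₀ (pow_pos (by nlinarith) 2)]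
  nlinarith [mul_pos (sub_pos.2 h1) (sub_pos.2 h2), sq_nonneg (c + 5 / 4)]

/-- For `d = 3 + 4α`, the number `D/d²` (`≈ 8.2884`) is not the largest among
its Galois conjugates: some conjugate (`≈ 328.5234`) is strictly larger.  In
particular `D/d²` is not the Frobenius–Perron dimension of a finite tensor
category. -/
theorem stmt13 :
    ratioConj (2 * cos (π / 7)) =
      (49 * (7 + 15 * qnum7 3 + 12 * qnum7 5)) / (3 + 4 * alpha) ^ 2 ∧
    (ratioConj (2 * cos (3 * π / 7)) > ratioConj (2 * cos (π / 7)) ∨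
      ratioConj (2 * cos (5 * π / 7)) > ratioConj (2 * cos (π / 7))) := by
  refine ⟨by rw [ratioConj, alpha, qnum7_three, qnum7_five]; ring, Or.inr ?_⟩
  obtain ⟨h1a, h1b⟩ := two_cos_pi_div_seven_bounds
  obtain ⟨h5a, h5b⟩ := two_cos_five_pi_div_seven_bounds
  exact (ratioConj_lt_nine h1a h1b).trans (nine_lt_ratioConj h5a h5b)
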